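/- Every non-vacuum necklace graph 𝒢 with ρ(𝒢) ≥ 1 (a non-leading-order graph) satisfies ω̄(𝒢) ≤ −N(𝒢)/2, where ω̄(𝒢) := ω(𝒢) + Σ_v (3 − N_{b(v)}/2) is the rescaled degree of divergence. -/

import Mathlib

/-!  Rank-4 tensorial bubbles and Feynman graphs, following
Carrozza–Lahoche–Oriti, "Renormalizable Group Field Theory beyond melonic
diagrams: an example in rank four". -/

open Finset

/-- A rank-4 bubble: a connected bipartite 4-colored regular graph, given by
finite sets of black and white nodes together with, for each color, a perfect
matching (bijection) between black and white nodes. -/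
structure Bubble where
  B : Type
  W : Type
  [fB : Fintype B]
  [fW : Fintype W]
  [dB : DecidableEq B]
  [dW : DecidableEq W]
  /-- for each color `i`, the perfect matching of color `i` -/
  edge : Fin 4 → B ≃ W
  /-- connectedness: the only subsets of nodes closed under colored adjacency
  are `∅` and `univ` -/
  conn : ∀ S : Finset (B ⊕ W),
    (∀ x ∈ S, ∀ y : B ⊕ W,
      (∃ i : Fin 4, (∃ u : B, x = Sum.inl u ∧ y = Sum.inr (edge i u)) ∨
        (∃ u : B, y = Sum.inl u ∧ x = Sum.inr (edge i u))) → y ∈ S) →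
    S = ∅ ∨ S = Finset.univ

attribute [instance] Bubble.fB Bubble.fW Bubble.dB Bubble.dW

/-- The valency of a bubble: its total number of nodes. -/
def Bubble.valency (b : Bubble) : ℕ := Fintype.card b.B + Fintype.card b.W

/-- Isomorphism of bubbles (color-preserving). -/
def Bubble.Iso (b b' : Bubble) : Prop :=
  ∃ (eB : b.B ≃ b'.B) (eW : b.W ≃ b'.W), ∀ (i : Fin 4) (x : b.B),
    eW (b.edge i x) = b'.edge i (eB x)

/-- The elementary 2-valent bubble. -/
def twoValent : Bubble where
  B := PUnit
  W := PUnit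
  edge := fun _ => Equiv.refl PUnit
  conn := by
    intro S hS
    rcases S.eq_empty_or_nonempty with h | ⟨x, hx⟩
    · exact Or.inl h
    · refine Or.inr (Finset.eq_univ_iff_forall.mpr fun y => ?_)
      rcases x with ⟨⟩ | ⟨⟩ <;> rcases y with ⟨⟩ | ⟨⟩
      · exact hx
      · exact hS _ hx _ ⟨0, Or.inl ⟨PUnit.unit, rfl, rfl⟩⟩
      · exact hS _ hx _ ⟨0, Or.inr ⟨PUnit.unit, rfl, rfl⟩⟩
      · exact hx

/-- The elementary necklace in which color `1` (index `0`) is paired with the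
color of index `ℓ.succ`, `ℓ : Fin 3`: its four nodes form a 4-cycle along which
double lines with the colors `{0, ℓ.succ}` alternate with double lines carrying
the complementary pair of colors. -/
def elemNecklace (ℓ : Fin 3) : Bubble where
  B := Fin 2
  W := Fin 2
  edge := fun c => if c = 0 ∨ c = ℓ.succ then Equiv.refl (Fin 2) else Equiv.swap 0 1
  conn := by fin_cases ℓ <;> decide

/-- The 4-valent melonic bubble of color `ℓ`. -/
def melon4 (ℓ : Fin 4) : Bubble where
  B := Fin 2
  W := Fin 2
  edge := fun c => if c = ℓ then Equiv.swap 0 1 else Equiv.refl (Fin 2)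
  conn := by fin_cases ℓ <;> decide

/-- The colored matchings of the connected sum of `b₁` and `b₂` at a black node
`n₁` of `b₁` and a white node `n₂` of `b₂`: delete `n₁, n₂` and join the
dangling colored half-lines according to their colors. -/
def connSumEdge (b₁ b₂ : Bubble) (n₁ : b₁.B) (n₂ : b₂.W) (i : Fin 4) :
    ({x : b₁.B // x ≠ n₁} ⊕ b₂.B) → (b₁.W ⊕ {y : b₂.W // y ≠ n₂})
  | Sum.inl x => Sum.inl (b₁.edge i x.1)
  | Sum.inr y =>
      if h : b₂.edge i y = n₂ then Sum.inl (b₁.edge i n₁)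
      else Sum.inr ⟨b₂.edge i y, h⟩

/-- `b₃` is the connected sum of `b₁` and `b₂` at `n₁` and `n₂`. -/
def IsConnSumAt (b₃ b₁ b₂ : Bubble) (n₁ : b₁.B) (n₂ : b₂.W) : Prop :=
  ∃ (eB : b₃.B ≃ ({x : b₁.B // x ≠ n₁} ⊕ b₂.B))
    (eW : b₃.W ≃ (b₁.W ⊕ {y : b₂.W // y ≠ n₂})),
    ∀ (i : Fin 4) (x : b₃.B), eW (b₃.edge i x) = connSumEdge b₁ b₂ n₁ n₂ i (eB x)

/-- The set `𝔹` of necklace bubbles: the 2-valent bubble together with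
everything generated by the three elementary necklaces under connected sums. -/
inductive IsNecklace : Bubble → Prop
  | two {b : Bubble} : b.Iso twoValent → IsNecklace b
  | elem {b : Bubble} (ℓ : Fin 3) : b.Iso (elemNecklace ℓ) → IsNecklace b
  | sum {b b₁ b₂ : Bubble} (n₁ : b₁.B) (n₂ : b₂.W) :
      IsNecklace b₁ → IsNecklace b₂ → IsConnSumAt b b₁ b₂ n₁ n₂ → IsNecklace b

/-- `(n, m)` is a `k`-dipole of the bubble `b`: `n` and `m` are joined by
exactly `k` colored lines. -/
def Bubble.IsDipole (b : Bubble) (n : b.B) (m : b.W) (k : ℕ) : Prop :=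
  (Finset.univ.filter fun i : Fin 4 => b.edge i n = m).card = k

/-- The colored matchings of the bubble obtained from `b` by contracting the
pair of nodes `(n, m)`: delete `n`, `m` and all colored lines between them, and
reconnect the dangling colored half-lines according to their colors. -/
def contractEdge (b : Bubble) (n : b.B) (m : b.W) (i : Fin 4)
    (x : {x : b.B // x ≠ n}) : {y : b.W // y ≠ m} :=
  if h : b.edge i x.1 = m then
    ⟨b.edge i n, fun hm => x.2 ((b.edge i).injective (h.trans hm.symm))⟩
  else ⟨b.edge i x.1, h⟩

/-- `b'` is the bubble obtained from `b` by contracting the dipole `(n, m)`. -/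
def Bubble.IsContractionAt (b' b : Bubble) (n : b.B) (m : b.W) : Prop :=
  ∃ (eB : b'.B ≃ {x : b.B // x ≠ n}) (eW : b'.W ≃ {y : b.W // y ≠ m}),
    ∀ (i : Fin 4) (x : b'.B), eW (b'.edge i x) = contractEdge b n m i (eB x)

/-- A Feynman graph: a finite collection of bubbles (the vertices) together
with 0-lines, each joining a black node to a white node, every node being
incident to at most one 0-line. Nodes not incident to a 0-line carry external
legs. -/
structure FGraph where
  V : Type
  [fV : Fintype V]
  [dV : DecidableEq V]
  bub : V → Bubble
  L : Type
  [fL : Fintype L]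
  [dL : DecidableEq L]
  /-- the black endpoint of a 0-line -/
  lb : L → Σ v : V, (bub v).B
  /-- the white endpoint of a 0-line -/
  lw : L → Σ v : V, (bub v).W
  lb_inj : Function.Injective lb
  lw_inj : Function.Injective lw

attribute [instance] FGraph.fV FGraph.dV FGraph.fL FGraph.dL

/-- The black nodes of a Feynman graph. -/
abbrev FGraph.NB (G : FGraph) : Type := Σ v : G.V, (G.bub v).B

/-- The white nodes of a Feynman graph. -/
abbrev FGraph.NW (G : FGraph) : Type := Σ v : G.V, (G.bub v).W

/-- The colored line of color `i` leaving the black node `x`. -/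
def FGraph.colorMap (G : FGraph) (i : Fin 4) (x : G.NB) : G.NW :=
  ⟨x.1, (G.bub x.1).edge i x.2⟩

/-- `L(𝒢)`: the number of 0-lines. -/
def FGraph.numL (G : FGraph) : ℕ := Fintype.card G.L

/-- `V(𝒢)`: the number of vertices (bubbles). -/
def FGraph.numV (G : FGraph) : ℕ := Fintype.card G.V

/-- `N(𝒢)`: the number of external legs. -/
def FGraph.numN (G : FGraph) : ℕ :=
  (Fintype.card G.NB - Fintype.card G.L) + (Fintype.card G.NW - Fintype.card G.L)

/-- `l'` is the successor of `l` in the face of color `i`: the white endpoint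
of `l'` is joined by a color-`i` line to the black endpoint of `l`. -/
def FGraph.NextRel (G : FGraph) (i : Fin 4) (l l' : G.L) : Prop :=
  G.lw l' = G.colorMap i (G.lb l)

/-- `C` is (the set of 0-lines of) an internal face of color `i`: a cycle of
the successor relation, i.e. a minimal nonempty set in which every 0-line has
its successor. -/
def FGraph.IsFace (G : FGraph) (i : Fin 4) (C : Finset G.L) : Prop :=
  C.Nonempty ∧ (∀ l ∈ C, ∃ l' ∈ C, G.NextRel i l l') ∧
    ∀ D : Finset G.L, D ⊆ C → D.Nonempty →
      (∀ l ∈ D, ∃ l' ∈ D, G.NextRel i l l') → D = C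

/-- `F(𝒢)`: the number of internal faces. -/
noncomputable def FGraph.numF (G : FGraph) : ℕ :=
  Set.ncard {p : Fin 4 × Finset G.L | G.IsFace p.1 p.2}

open Classical in
/-- The line/face incidence matrix `ε`, with internal faces coherently oriented
so that every 0-line occurs in a face it belongs to with matching
orientation. -/
noncomputable def FGraph.epsMat (G : FGraph) :
    Matrix G.L (Fin 4 × Finset G.L) ℚ :=
  fun l p => if G.IsFace p.1 p.2 ∧ l ∈ p.2 then 1 else 0

/-- `R(𝒢)`: the rank of the incidence matrix `ε` over `ℚ`. -/
noncomputable def FGraph.numR (G : FGraph) : ℕ := G.epsMat.rank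

/-- The Abelian degree of divergence `ω(𝒢) = -2L + 3(F - R)`. -/
noncomputable def FGraph.omega (G : FGraph) : ℤ :=
  -2 * (G.numL : ℤ) + 3 * ((G.numF : ℤ) - (G.numR : ℤ))

/-- `ρ(𝒢) = (L - V + 1) - (F - R)`. -/
noncomputable def FGraph.rho (G : FGraph) : ℤ :=
  ((G.numL : ℤ) - (G.numV : ℤ) + 1) - ((G.numF : ℤ) - (G.numR : ℤ))

/-- Adjacency of the vertices `a, b` through a 0-line belonging to `T`. -/
def FGraph.VAdjOn (G : FGraph) (T : Finset G.L) (a b : G.V) : Prop :=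
  ∃ l ∈ T, ((G.lb l).1 = a ∧ (G.lw l).1 = b) ∨ ((G.lb l).1 = b ∧ (G.lw l).1 = a)

/-- Adjacency of the vertices `a, b` through some 0-line. -/
def FGraph.VAdj (G : FGraph) (a b : G.V) : Prop :=
  ∃ l : G.L, ((G.lb l).1 = a ∧ (G.lw l).1 = b) ∨ ((G.lb l).1 = b ∧ (G.lw l).1 = a)

/-- Connectedness of a Feynman graph. -/
def FGraph.Connected (G : FGraph) : Prop :=
  Nonempty G.V ∧ ∀ v v' : G.V, Relation.ReflTransGen G.VAdj v v'

/-- `T` is a spanning tree of 0-lines of `𝒢`. -/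
def FGraph.IsSpanningTree (G : FGraph) (T : Finset G.L) : Prop :=
  T.card + 1 = Fintype.card G.V ∧
    ∀ v v' : G.V, Relation.ReflTransGen (G.VAdjOn T) v v'

/-- Rerouting of a color-`i` half-line through the contracted lines `T`:
as long as the reached white node is an endpoint of a contracted line, jump to
the color-`i` line leaving the black endpoint of that contracted line. -/
noncomputable def FGraph.reroute (G : FGraph) (T : Finset G.L) (i : Fin 4) :
    ℕ → G.NW → G.NW
  | 0, w => w
  | fuel + 1, w =>
      if h : ∃ l ∈ T, G.lw l = w then
        G.reroute T i fuel (G.colorMap i (G.lb h.choose))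
      else w

/-- `G'` is the Feynman graph obtained from `G` by contracting all the 0-lines
of `T` (deleting their end nodes and the colored lines between them, and
reconnecting the dangling colored half-lines by colors). -/
def FGraph.IsQuotientBy (G' G : FGraph) (T : Finset G.L) : Prop :=
  ∃ (eL : G'.L ≃ {l : G.L // l ∉ T})
    (eB : G'.NB ≃ {x : G.NB // ∀ l ∈ T, G.lb l ≠ x})
    (eW : G'.NW ≃ {y : G.NW // ∀ l ∈ T, G.lw l ≠ y}),
    (∀ l' : G'.L,
      (eB (G'.lb l')).1 = G.lb (eL l').1 ∧ (eW (G'.lw l')).1 = G.lw (eL l').1) ∧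
    ∀ (i : Fin 4) (x : G'.NB),
      (eW (G'.colorMap i x)).1 = G.reroute T i T.card (G.colorMap i (eB x).1)

/-- `G'` is the Feynman graph obtained from `G` by contracting the 0-line `l`. -/
def FGraph.IsContractionAt (G' G : FGraph) (l : G.L) : Prop :=
  FGraph.IsQuotientBy G' G {l}

/-- The 0-line `l` is a `k`-dipole: its two end nodes are joined by exactly
`k - 1` colored lines. -/
def FGraph.IsDipoleLine (G : FGraph) (l : G.L) (k : ℕ) : Prop :=
  (Finset.univ.filter fun i : Fin 4 => G.colorMap i (G.lb l) = G.lw l).card = k - 1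

/-- A Feynman graph is 3-dipole contractible if its 0-lines can be contracted
one after the other, each being a 3-dipole at the moment of its contraction. -/
inductive DipoleContractible : FGraph → Prop
  | nil {G : FGraph} : Fintype.card G.L = 0 → DipoleContractible G
  | step {G G' : FGraph} (l : G.L) : G.IsDipoleLine l 3 →
      FGraph.IsContractionAt G' G l → DipoleContractible G' → DipoleContractible G

/-- A necklace graph: a connected Feynman graph all of whose vertices are
necklace bubbles. -/
def FGraph.IsNecklaceGraph (G : FGraph) : Prop :=
  G.Connected ∧ ∀ v : G.V, IsNecklace (G.bub v)

/-- `r ∈ ℛ₂(b)`: a Feynman graph with a single vertex `b` and exactly two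
external legs. -/
def IsR2 (r : FGraph) (b : Bubble) : Prop :=
  Fintype.card r.V = 1 ∧ (∀ v : r.V, (r.bub v).Iso b) ∧ r.numN = 2

/-- `M = max_{r ∈ ℛ₂(b)} ω(r)`. -/
def IsMaxOmega2 (b : Bubble) (M : ℤ) : Prop :=
  (∃ r : FGraph, IsR2 r b ∧ r.omega = M) ∧ ∀ r : FGraph, IsR2 r b → r.omega ≤ M

/-- The bubble dimension `d̃_b = 2 - max_{r ∈ ℛ₂(b)} ω(r)`. -/
def HasBubbleDim (b : Bubble) (d : ℤ) : Prop :=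
  ∃ M : ℤ, IsMaxOmega2 b M ∧ d = 2 - M

open Classical in
/-- The (unique, if any) successor of the 0-line `l` in the face of color `i`. -/
noncomputable def FGraph.nextL (G : FGraph) (i : Fin 4) (l : G.L) : Option G.L :=
  if h : ∃ l' : G.L, G.NextRel i l l' then some h.choose else none

/-- The ordered product of the group elements attached to the `k` consecutive
0-lines of the face of color `i` starting at `l`. -/
noncomputable def FGraph.holPath (G : FGraph) {Γ : Type*} [Monoid Γ]
    (h : G.L → Γ) (i : Fin 4) : ℕ → G.L → Γ
  | 0, _ => 1
  | k + 1, l => h l * (G.nextL i l).elim 1 (fun l' => FGraph.holPath G h i k l')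

/-! Every node carries either an external leg or one end of a 0-line, so
`Σ_v N_{b(v)} = N + 2L`. Substituting this into the definitions gives the identity
`2 ω̄(𝒢) = 6 - 6 ρ(𝒢) - N(𝒢)` for every Feynman graph, and `ρ ≥ 1` yields the bound. -/

namespace FGraph

variable (G : FGraph)

theorem sum_valency : ∑ v, (G.bub v).valency = Fintype.card G.NB + Fintype.card G.NW := by
  simp only [Bubble.valency, Finset.sum_add_distrib, Fintype.card_sigma]

theorem numN_add_two_mul_numL :
    G.numN + 2 * G.numL = Fintype.card G.NB + Fintype.card G.NW := by
  have hB : G.numL ≤ Fintype.card G.NB := Fintype.card_le_of_injective _ G.lb_inj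
  have hW : G.numL ≤ Fintype.card G.NW := Fintype.card_le_of_injective _ G.lw_inj
  unfold numN
  unfold numL at *
  omega

theorem two_mul_omega_add_sum_eq :
    2 * G.omega + ∑ v, (6 - ((G.bub v).valency : ℤ)) = 6 - 6 * G.rho - G.numN := by
  have hval : ∑ v, ((G.bub v).valency : ℤ) = G.numN + 2 * G.numL := by
    exact_mod_cast G.sum_valency.trans G.numN_add_two_mul_numL.symm
  rw [Finset.sum_sub_distrib, hval, Finset.sum_const, Finset.card_univ]
  simp only [omega, rho, numV, nsmul_eq_mul]
  ring

end FGraph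

theorem nonLO_convergent_general (G : FGraph) (hrho : 1 ≤ G.rho) :
    2 * G.omega + ∑ v : G.V, (6 - ((G.bub v).valency : ℤ)) ≤ -(G.numN : ℤ) := by
  rw [G.two_mul_omega_add_sum_eq]
  linarith

/-- **Corollary 3 (convergence of non-leading-order graphs).**
Every non-vacuum necklace graph with `ρ(𝒢) ≥ 1` satisfies
`ω̄(𝒢) ≤ -N(𝒢)/2`, where `ω̄ = ω + Σ_v (3 - N_{b(v)}/2)` (stated multiplied
by `2` to stay in `ℤ`). -/
theorem nonLO_convergent (G : FGraph) (hG : G.IsNecklaceGraph)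
    (hnv : 1 ≤ G.numN) (hrho : 1 ≤ G.rho) :
    2 * G.omega + ∑ v : G.V, (6 - ((G.bub v).valency : ℤ)) ≤ -(G.numN : ℤ) :=
  nonLO_convergent_general G hrho
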